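/- For all nonzero complex numbers s and t, the 12×7 complex matrix A(s, t, t, s, 1, (st)⁻¹, 1) has rank at most 5; that is, the braid component Π₃ = Π(14|23|68) = {(s, t, t, s, 1, (st)⁻¹, 1, (st)⁻¹) : s, t ∈ ℂ*} is contained in the first characteristic variety V₁(D). -/

import Mathlib

/-!
Both vectors `(st, -t, -t, 1, 0, 0, 0)` and `(st(s - 1), -st, -st, 0, 0, 1, 0)` lie in the kernel of
`A(s, t, t, s, 1, (st)⁻¹, 1)`; they are independent, so the rank of this `12 × 7` matrix is at
most `7 - 2 = 5`.
-/

open Matrix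

/-- The Alexander matrix of the fundamental group of the complement of the
deconed deleted B₃ arrangement, evaluated at `(t₁, …, t₇)`. -/
noncomputable def alexD (t₁ t₂ t₃ t₄ t₅ t₆ t₇ : ℂ) : Matrix (Fin 12) (Fin 7) ℂ :=
  !![1 - t₅, 0, 0, 0, t₁ - 1, 0, 0;
     0, t₅ * (t₃ - 1), 1 - t₂ * t₅, 0, t₃ - 1, 0, 0;
     0, 1 - t₅, t₂ * (1 - t₅), 0, t₂ * t₃ - 1, 0, 0;
     0, 0, 0, 1 - t₅, t₄ - 1, 0, 0;
     t₆ * (t₃ - 1), (t₃ - 1) * (t₁ * t₆ - 1), t₂ * (1 - t₁ * t₆), 0, 0, t₃ - 1, 0;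
     1 - t₆, t₁ * (t₃ - 1) * (t₆ - 1), t₁ * t₂ * (1 - t₆), 0, 0, t₁ * t₃ - 1, 0;
     0, t₆ * (t₄ - 1), 0, 1 - t₂ * t₆, 0, t₄ - 1, 0;
     0, 1 - t₆, 0, t₂ * (1 - t₆), 0, t₂ * t₄ - 1, 0;
     t₇ * (t₄ - 1), (t₄ - 1) * (t₁ * t₇ - 1), 0, t₂ * (1 - t₁ * t₇), 0, 0, t₄ - 1;
     1 - t₇, t₁ * (1 - t₇), 0, t₁ * t₂ * (1 - t₇), 0, 0, t₁ * t₂ * t₄ - 1;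
     0, 1 - t₇, 0, 0, 0, 0, t₂ - 1;
     0, 0, 1 - t₇, (t₃ - 1) * (1 - t₇), 0, 0, t₄ * (t₃ - 1)]

/-- The `d`-th characteristic variety of the deleted B₃ arrangement `D`:
points `x` of the algebraic torus `(ℂ*)⁸` such that `(x₁,…,x₇) ∈ V_d(D*)`,
i.e. `rank A(x₁,…,x₇) < 7 - d`, and `x₁x₂⋯x₈ = 1`. -/
noncomputable def VD (d : ℕ) : Set (Fin 8 → ℂ) :=
  {x | (∀ i, x i ≠ 0) ∧
       (alexD (x 0) (x 1) (x 2) (x 3) (x 4) (x 5) (x 6)).rank < 7 - d ∧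
       x 0 * x 1 * x 2 * x 3 * x 4 * x 5 * x 6 * x 7 = 1}

theorem Matrix.rank_add_card_le_of_mulVec_eq_zero {K l m ι : Type*} [Field K] [Finite l]
    [Fintype m] [Fintype ι] {A : Matrix l m K} {v : ι → m → K}
    (hv : LinearIndependent K v) (hAv : ∀ i, A *ᵥ v i = 0) :
    A.rank + Fintype.card ι ≤ Fintype.card m := by
  have hAB : A * (of v)ᵀ = 0 := by
    ext j i
    simpa [mul_apply, mulVec, dotProduct] using congrFun (hAv i) j
  have hB : (of v)ᵀ.rank = Fintype.card ι := by
    rw [rank_transpose]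
    exact hv.rank_matrix
  simpa [hB] using rank_add_rank_le_card_of_mul_eq_zero hAB

def braidKernel (s t : ℂ) : Fin 2 → Fin 7 → ℂ :=
  ![![s * t, -t, -t, 1, 0, 0, 0], ![s * t * (s - 1), -(s * t), -(s * t), 0, 0, 1, 0]]

theorem linearIndependent_braidKernel (s t : ℂ) : LinearIndependent ℂ (braidKernel s t) := by
  rw [braidKernel, LinearIndependent.pair_iff]
  intro a b hab
  exact ⟨by simpa using congrFun hab 3, by simpa using congrFun hab 5⟩

theorem alexD_mulVec_braidKernel {s t u : ℂ} (hu : s * t * u = 1) (i : Fin 2) :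
    alexD s t t s 1 u 1 *ᵥ braidKernel s t i = 0 := by
  ext j
  fin_cases i <;> fin_cases j <;>
    simp only [alexD, braidKernel, mulVec, dotProduct, Fin.sum_univ_succ, Fin.sum_univ_zero,
      of_apply, cons_val', cons_val_fin_one, cons_val, cons_val_zero, cons_val_one, cons_val_succ,
      Fin.zero_eta, Fin.mk_one, Fin.reduceFinMk, Fin.isValue, Pi.zero_apply] <;>
    grind

/-- the braid component `Π₃ = Π(14|23|68)` is contained in `V₁(D)`. -/
theorem braid_component_Pi3_in_V1 (s t : ℂ) (hs : s ≠ 0) (ht : t ≠ 0) :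
    (alexD s t t s 1 ((s * t)⁻¹) 1).rank ≤ 5 ∧
    (![s, t, t, s, 1, (s * t)⁻¹, 1, (s * t)⁻¹] : Fin 8 → ℂ) ∈ VD 1 := by
  have hst : s * t ≠ 0 := mul_ne_zero hs ht
  have hrank : (alexD s t t s 1 ((s * t)⁻¹) 1).rank ≤ 5 := by
    have := rank_add_card_le_of_mulVec_eq_zero (linearIndependent_braidKernel s t)
      (alexD_mulVec_braidKernel (mul_inv_cancel₀ hst))
    simp only [Fintype.card_fin] at this
    omega
  refine ⟨hrank, fun i => ?_, Nat.lt_succ_of_le hrank, ?_⟩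
  · fin_cases i <;> simp [hs, ht]
  · change s * t * t * s * 1 * (s * t)⁻¹ * 1 * (s * t)⁻¹ = 1
    field_simp
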